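/- Let v_max > 0, let y ∈ ℝ, and let β ∈ (0, v_max). Define P := ( y·(v_max − 2β) + √( y²·v_max² + 4·(v_max − β)·β ) ) / (2·(1 + y²)). Then |P| ≤ (5/4)·v_max. -/
import Mathlib

/-- The bound `|p(y, x)| ≤ (5/4)·v_max` (estimate (6.38)) for the function
appearing in the inverse state transformation of the cruise controller,
written with `β := v* − b(x) ∈ (0, v_max)`. -/
theorem p_function_bound (vmax y β : ℝ) (hv : 0 < vmax) (hβ0 : 0 < β) (hβv : β < vmax) :
    |(y * (vmax - 2 * β) + Real.sqrt (y ^ 2 * vmax ^ 2 + 4 * (vmax - β) * β)) /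
        (2 * (1 + y ^ 2))| ≤ 5 / 4 * vmax := by
  set q := Real.sqrt (y ^ 2 * vmax ^ 2 + 4 * (vmax - β) * β) with hq
  have hq0 : 0 ≤ q := Real.sqrt_nonneg _
  have hqle : q ≤ (1 + y ^ 2) * vmax := by
    rw [hq]
    have h1 : y ^ 2 * vmax ^ 2 + 4 * (vmax - β) * β ≤ ((1 + y ^ 2) * vmax) ^ 2 := by
      nlinarith [sq_nonneg (vmax - 2 * β), sq_nonneg (y ^ 2 * vmax), sq_nonneg y]
    calc Real.sqrt (y ^ 2 * vmax ^ 2 + 4 * (vmax - β) * β)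
        ≤ Real.sqrt (((1 + y ^ 2) * vmax) ^ 2) := Real.sqrt_le_sqrt h1
      _ = (1 + y ^ 2) * vmax := Real.sqrt_sq (by positivity)
  have hden : (0:ℝ) < 2 * (1 + y ^ 2) := by positivity
  rw [abs_div, abs_of_pos hden, div_le_iff₀ hden]
  rw [abs_le]
  have h1 := neg_abs_le y
  have h2 := le_abs_self y
  have h3 := abs_nonneg y
  have h4 : |y| ^ 2 = y ^ 2 := sq_abs y
  constructor
  · nlinarith [sq_nonneg (|y| - 1), mul_nonneg hβ0.le h3]
  · nlinarith [sq_nonneg (|y| - 1), mul_nonneg hβ0.le h3]
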